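/- arXiv:2310.13511 — 2 statements merged into one kernel-verified Lean document; each statement's English description precedes it below -/
import Mathlib

section
/- Let β be a p×p real matrix with strictly positive column sums c_l := ∑_{r=1}^p β_{r l} > 0 and define B by B_{k l} := β_{k l} / √(c_l). Let Ω be a p×p matrix satisfying the compatibility condition: for all indices k, l, if c_k ≠ c_l then Ω_{k l} = 0. Then (B Ω Bᵀ) 𝟙 = β Ω 𝟙. -/
/-!
Write `c` for the column sums of `β`, so that `B = β · diag(c)^{-1/2}`. The column sums of `B`
are then `c / √c = √c`, hence `B Ω Bᵀ 𝟙 = B Ω √c`. The compromise condition says exactly that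
`Ω` commutes with `diag(√c)`, so `Ω √c = √c ⊙ Ω 𝟙`, and `B (√c ⊙ v) = β v` because `c > 0`.
-/

open Matrix

namespace Matrix

variable {m n R : Type*}

theorem mulVec_eq_mul_mulVec_one_of_apply_eq_zero [Fintype n] [CommSemiring R] (Ω : Matrix n n R)
    (d : n → R) (hΩ : ∀ k l, d k ≠ d l → Ω k l = 0) : Ω *ᵥ d = d * (Ω *ᵥ 1) := by
  funext k
  simp only [Pi.mul_apply, mulVec, dotProduct, Pi.one_apply, mul_one, Finset.mul_sum]
  refine Finset.sum_congr rfl fun l _ => ?_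
  by_cases h : d k = d l
  · rw [h, mul_comm]
  · rw [hΩ k l h, zero_mul, mul_zero]

variable [Fintype m] {β B : Matrix m n ℝ}

theorem transpose_mulVec_one_of_div_sqrt_colSum
    (hB : ∀ k l, B k l = β k l / √(∑ r, β r l)) :
    Bᵀ *ᵥ 1 = fun l => √(∑ r, β r l) := by
  funext l
  simp only [mulVec, dotProduct, transpose_apply, Pi.one_apply, mul_one, hB, ← Finset.sum_div,
    Real.div_sqrt]

theorem mulVec_sqrt_colSum_mul_of_div_sqrt_colSum [Fintype n] (hcol : ∀ l, 0 < ∑ r, β r l)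
    (hB : ∀ k l, B k l = β k l / √(∑ r, β r l)) (v : n → ℝ) :
    B *ᵥ ((fun l => √(∑ r, β r l)) * v) = β *ᵥ v := by
  funext k
  refine Finset.sum_congr rfl fun l _ => ?_
  have hsqrt : √(∑ r, β r l) ≠ 0 := (Real.sqrt_pos.mpr (hcol l)).ne'
  simp only [Pi.mul_apply, hB]
  field_simp

end Matrix

/-- Compromise condition: if `Ω_{kl} = 0` whenever the column sums `c_k ≠ c_l` of `β`
differ, and `B_{kl} = β_{kl}/√(c_l)` with `c_l > 0`, then `(B Ω Bᵀ) 𝟙 = β Ω 𝟙`. -/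
theorem stmt5 (p : ℕ) (β : Matrix (Fin p) (Fin p) ℝ)
    (hcol : ∀ l, 0 < ∑ r, β r l)
    (B : Matrix (Fin p) (Fin p) ℝ)
    (hB : ∀ k l, B k l = β k l / Real.sqrt (∑ r, β r l))
    (Ω : Matrix (Fin p) (Fin p) ℝ)
    (hΩ : ∀ k l, (∑ r, β r k) ≠ (∑ r, β r l) → Ω k l = 0) :
    (B * Ω * Bᵀ) *ᵥ (fun _ => (1 : ℝ)) = (β * Ω) *ᵥ (fun _ => (1 : ℝ)) := by
  have hΩsqrt : ∀ k l, √(∑ r, β r k) ≠ √(∑ r, β r l) → Ω k l = 0 :=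
    fun k l h => hΩ k l fun hc => h (congrArg Real.sqrt hc)
  calc (B * Ω * Bᵀ) *ᵥ 1 = B *ᵥ (Ω *ᵥ (Bᵀ *ᵥ 1)) := by rw [← mulVec_mulVec, ← mulVec_mulVec]
    _ = B *ᵥ ((fun l => √(∑ r, β r l)) * (Ω *ᵥ 1)) := by
      rw [transpose_mulVec_one_of_div_sqrt_colSum hB,
        mulVec_eq_mul_mulVec_one_of_apply_eq_zero Ω _ hΩsqrt]
    _ = (β * Ω) *ᵥ 1 := by
      rw [mulVec_sqrt_colSum_mul_of_div_sqrt_colSum hcol hB, mulVec_mulVec]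
end

section
/- Let Ω̂, Ω, Γ̂ be p×p real matrices. Then ‖Ω̂ − Ω‖_max ≤ ‖Ω‖_∞ · ‖Γ̂ Ω̂ − I‖_max + ‖Ω Γ̂ − I‖_max · ‖Ω̂‖₁, where ‖·‖_max is the entrywise maximum absolute value, ‖·‖_∞ the maximum absolute row sum, and ‖·‖₁ the maximum absolute column sum. -/
/-- Entrywise max norm of a matrix. -/
noncomputable def maxNorm {p : ℕ} (M : Matrix (Fin p) (Fin p) ℝ) : ℝ :=
  ⨆ i, ⨆ j, |M i j|

/-- Maximum absolute column sum. -/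
noncomputable def colNorm {p : ℕ} (M : Matrix (Fin p) (Fin p) ℝ) : ℝ :=
  ⨆ j, ∑ i, |M i j|

/-- Maximum absolute row sum. -/
noncomputable def rowNorm {p : ℕ} (M : Matrix (Fin p) (Fin p) ℝ) : ℝ :=
  ⨆ i, ∑ j, |M i j|

/-! The bound on `Ω̂ - Ω` comes from the identity
`Ω̂ - Ω = Ω (Γ̂ Ω̂ - I) - (Ω Γ̂ - I) Ω̂`, valid in any ring, together with the two mixed
Hölder-type estimates `‖A B‖_max ≤ ‖A‖_∞ ‖B‖_max` and `‖A B‖_max ≤ ‖A‖_max ‖B‖₁`. -/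

theorem sub_eq_mul_mul_sub_one_sub_mul_sub_one_mul {R : Type*} [Ring R] (a b c : R) :
    a - b = b * (c * a - 1) - (b * c - 1) * a := by
  noncomm_ring

section MatrixNorms

variable {p : ℕ}

theorem maxNorm_nonneg (M : Matrix (Fin p) (Fin p) ℝ) : 0 ≤ maxNorm M :=
  Real.iSup_nonneg fun _ => Real.iSup_nonneg fun _ => abs_nonneg _

theorem abs_le_maxNorm (M : Matrix (Fin p) (Fin p) ℝ) (i j : Fin p) : |M i j| ≤ maxNorm M :=
  (le_ciSup (f := fun j => |M i j|) (Set.finite_range _).bddAbove j).trans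
    (le_ciSup (f := fun i => ⨆ j, |M i j|) (Set.finite_range _).bddAbove i)

theorem rowNorm_nonneg (M : Matrix (Fin p) (Fin p) ℝ) : 0 ≤ rowNorm M :=
  Real.iSup_nonneg fun _ => Finset.sum_nonneg fun _ _ => abs_nonneg _

theorem colNorm_nonneg (M : Matrix (Fin p) (Fin p) ℝ) : 0 ≤ colNorm M :=
  Real.iSup_nonneg fun _ => Finset.sum_nonneg fun _ _ => abs_nonneg _

theorem maxNorm_le {M : Matrix (Fin p) (Fin p) ℝ} {c : ℝ} (h : ∀ i j, |M i j| ≤ c)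
    (hc : 0 ≤ c) : maxNorm M ≤ c :=
  Real.iSup_le (fun i => Real.iSup_le (h i) hc) hc

theorem sum_abs_le_rowNorm (M : Matrix (Fin p) (Fin p) ℝ) (i : Fin p) :
    ∑ j, |M i j| ≤ rowNorm M :=
  le_ciSup (f := fun i => ∑ j, |M i j|) (Set.finite_range _).bddAbove i

theorem sum_abs_le_colNorm (M : Matrix (Fin p) (Fin p) ℝ) (j : Fin p) :
    ∑ i, |M i j| ≤ colNorm M :=
  le_ciSup (f := fun j => ∑ i, |M i j|) (Set.finite_range _).bddAbove j

theorem abs_mul_apply_le_sum_abs_mul_abs (A B : Matrix (Fin p) (Fin p) ℝ) (i j : Fin p) :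
    |(A * B) i j| ≤ ∑ k, |A i k| * |B k j| := by
  simpa only [Matrix.mul_apply, abs_mul] using Finset.abs_sum_le_sum_abs (fun k => A i k * B k j) Finset.univ

theorem abs_mul_apply_le_rowNorm_mul_maxNorm (A B : Matrix (Fin p) (Fin p) ℝ) (i j : Fin p) :
    |(A * B) i j| ≤ rowNorm A * maxNorm B :=
  calc |(A * B) i j| ≤ ∑ k, |A i k| * |B k j| := abs_mul_apply_le_sum_abs_mul_abs A B i j
    _ ≤ ∑ k, |A i k| * maxNorm B := by gcongr with k; exact abs_le_maxNorm B k j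
    _ = (∑ k, |A i k|) * maxNorm B := (Finset.sum_mul _ _ _).symm
    _ ≤ rowNorm A * maxNorm B := by
      gcongr
      exacts [maxNorm_nonneg B, sum_abs_le_rowNorm A i]

theorem abs_mul_apply_le_maxNorm_mul_colNorm (A B : Matrix (Fin p) (Fin p) ℝ) (i j : Fin p) :
    |(A * B) i j| ≤ maxNorm A * colNorm B :=
  calc |(A * B) i j| ≤ ∑ k, |A i k| * |B k j| := abs_mul_apply_le_sum_abs_mul_abs A B i j
    _ ≤ ∑ k, maxNorm A * |B k j| := by gcongr with k; exact abs_le_maxNorm A i k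
    _ = maxNorm A * ∑ k, |B k j| := (Finset.mul_sum _ _ _).symm
    _ ≤ maxNorm A * colNorm B := by
      gcongr
      exacts [maxNorm_nonneg A, sum_abs_le_colNorm B j]

end MatrixNorms

/-- Central CLIME decomposition inequality:
`‖Ω̂ − Ω‖_max ≤ ‖Ω‖_∞ ‖Γ̂Ω̂ − I‖_max + ‖ΩΓ̂ − I‖_max ‖Ω̂‖₁`. -/
theorem stmt8 (p : ℕ) (Ωhat Ω Γhat : Matrix (Fin p) (Fin p) ℝ) :
    maxNorm (Ωhat - Ω) ≤
      rowNorm Ω * maxNorm (Γhat * Ωhat - 1) + maxNorm (Ω * Γhat - 1) * colNorm Ωhat := by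
  rw [sub_eq_mul_mul_sub_one_sub_mul_sub_one_mul Ωhat Ω Γhat]
  refine maxNorm_le (fun i j => ?_) ?_
  · calc |(Ω * (Γhat * Ωhat - 1) - (Ω * Γhat - 1) * Ωhat) i j|
        ≤ |(Ω * (Γhat * Ωhat - 1)) i j| + |((Ω * Γhat - 1) * Ωhat) i j| := abs_sub _ _
      _ ≤ _ := add_le_add (abs_mul_apply_le_rowNorm_mul_maxNorm _ _ i j)
          (abs_mul_apply_le_maxNorm_mul_colNorm _ _ i j)
  · exact add_nonneg (mul_nonneg (rowNorm_nonneg Ω) (maxNorm_nonneg _))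
      (mul_nonneg (maxNorm_nonneg _) (colNorm_nonneg Ωhat))
end
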